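/- arXiv:1405.2294 — 3 statements merged into one kernel-verified Lean document; each statement's English description precedes it below -/
import Mathlib

section
/- Unbiasedness of the MMD estimator: Let p and q be probability measures on a measurable space 𝒳 and let k : 𝒳 × 𝒳 → ℝ be a measurable bounded kernel. Let X = (x_1,…,x_{l_1}) be i.i.d. with law p and Y = (y_1,…,y_{l_2}) be i.i.d. with law q, with X and Y independent, l_1 ≥ 2, l_2 ≥ 2. Then E[ MMD_u²[X,Y] ] = MMD²[p,q]. -/
open MeasureTheory ProbabilityTheory Filter

noncomputable def mmdSq {𝓧 : Type*} [MeasurableSpace 𝓧]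
    (κ : 𝓧 → 𝓧 → ℝ) (p q : Measure 𝓧) : ℝ :=
  (∫ x, ∫ x', κ x x' ∂p ∂p) - 2 * (∫ x, ∫ y, κ x y ∂q ∂p)
    + (∫ y, ∫ y', κ y y' ∂q ∂q)

noncomputable def mmdU {𝓧 : Type*} (κ : 𝓧 → 𝓧 → ℝ)
    {ι₁ ι₂ : Type*} [Fintype ι₁] [Fintype ι₂] [DecidableEq ι₁] [DecidableEq ι₂]
    (X : ι₁ → 𝓧) (Y : ι₂ → 𝓧) : ℝ :=
  (1 / ((Fintype.card ι₁ : ℝ) * ((Fintype.card ι₁ : ℝ) - 1))) *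
      ∑ i : ι₁, ∑ j ∈ Finset.univ.erase i, κ (X i) (X j)
    + (1 / ((Fintype.card ι₂ : ℝ) * ((Fintype.card ι₂ : ℝ) - 1))) *
      ∑ i : ι₂, ∑ j ∈ Finset.univ.erase i, κ (Y i) (Y j)
    - (2 / ((Fintype.card ι₁ : ℝ) * (Fintype.card ι₂ : ℝ))) *
      ∑ i : ι₁, ∑ j : ι₂, κ (X i) (Y j)

section Aux

variable {𝓧 : Type*} [MeasurableSpace 𝓧]

lemma pi_map_eval_aux {n : ℕ} (p : Measure 𝓧) [IsProbabilityMeasure p] (i : Fin n) :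
    Measure.map (fun x : Fin n → 𝓧 => x i) (Measure.pi fun _ => p) = p := by
  ext s hs
  rw [Measure.map_apply (measurable_pi_apply i) hs]
  have hset : (fun x : Fin n → 𝓧 => x i) ⁻¹' s
      = Set.pi Set.univ (Function.update (fun _ => Set.univ) i s) := by
    ext x
    simp only [Set.mem_preimage, Set.mem_pi, Set.mem_univ, true_implies]
    constructor
    · intro h k
      rcases eq_or_ne k i with rfl | hk
      · simpa using h
      · simp [Function.update_of_ne hk]
    · intro h
      simpa using h i
  rw [hset, Measure.pi_pi]
  have hcomp : (fun k => p (Function.update (fun _ => (Set.univ : Set 𝓧)) i s k))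
      = Function.update (fun _ : Fin n => p (Set.univ : Set 𝓧)) i (p s) :=
    Function.comp_update (⇑p) (fun _ : Fin n => (Set.univ : Set 𝓧)) i s
  rw [hcomp, Finset.prod_update_of_mem (Finset.mem_univ i)]
  simp

lemma pi_map_pair_aux {n : ℕ} (p : Measure 𝓧) [IsProbabilityMeasure p] {i j : Fin n}
    (hij : i ≠ j) :
    Measure.map (fun x : Fin n → 𝓧 => (x i, x j)) (Measure.pi fun _ => p) = p.prod p := by
  refine (Measure.prod_eq fun s t hs ht => ?_).symm
  rw [Measure.map_apply ((measurable_pi_apply i).prodMk (measurable_pi_apply j)) (hs.prod ht)]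
  have hset : (fun x : Fin n → 𝓧 => (x i, x j)) ⁻¹' s ×ˢ t
      = Set.pi Set.univ
          (Function.update (Function.update (fun _ => Set.univ) i s) j t) := by
    ext x
    simp only [Set.mem_preimage, Set.mem_prod, Set.mem_pi, Set.mem_univ, true_implies]
    constructor
    · rintro ⟨h1, h2⟩ k
      rcases eq_or_ne k j with rfl | hkj
      · simpa using h2
      rcases eq_or_ne k i with rfl | hki
      · simpa [Function.update_of_ne hij] using h1
      · simp [Function.update_of_ne hkj, Function.update_of_ne hki]
    · intro h
      refine ⟨?_, ?_⟩
      · have := h i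
        simpa [Function.update_of_ne hij] using this
      · have := h j
        simpa using this
  rw [hset, Measure.pi_pi]
  have hcomp1 : (fun k => p (Function.update
        (Function.update (fun _ => (Set.univ : Set 𝓧)) i s) j t k))
      = Function.update
          (fun k => p (Function.update (fun _ => (Set.univ : Set 𝓧)) i s k)) j (p t) :=
    Function.comp_update (⇑p) _ j t
  have hcomp2 : (fun k => p (Function.update (fun _ => (Set.univ : Set 𝓧)) i s k))
      = Function.update (fun _ : Fin n => p (Set.univ : Set 𝓧)) i (p s) :=
    Function.comp_update (⇑p) _ i s
  rw [hcomp1, Finset.prod_update_of_mem (Finset.mem_univ j), hcomp2,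
    Finset.prod_update_of_mem (show i ∈ Finset.univ \ {j} by simp [hij])]
  simp [mul_comm]

lemma integrable_of_abs_le {Ω' : Type*} [MeasurableSpace Ω'] {μ : Measure Ω'}
    [IsFiniteMeasure μ] {f : Ω' → ℝ} {K : ℝ}
    (hf : AEStronglyMeasurable f μ) (h : ∀ ω, |f ω| ≤ K) : Integrable f μ :=
  (integrable_const K).mono' hf (ae_of_all _ fun ω => by
    simpa [Real.norm_eq_abs] using h ω)

lemma integral_comp_pair {κ : 𝓧 → 𝓧 → ℝ} {K : ℝ}
    (hκ : Measurable (Function.uncurry κ)) (hb : ∀ x y, |κ x y| ≤ K)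
    {Ω' : Type*} [MeasurableSpace Ω'] {μ : Measure Ω'} {g : Ω' → 𝓧 × 𝓧}
    (hg : Measurable g) {m₁ m₂ : Measure 𝓧} [IsFiniteMeasure m₁] [IsFiniteMeasure m₂]
    (hmap : Measure.map g μ = m₁.prod m₂) :
    ∫ z, κ (g z).1 (g z).2 ∂μ = ∫ x, ∫ y, κ x y ∂m₂ ∂m₁ := by
  have hint : Integrable (Function.uncurry κ) (m₁.prod m₂) :=
    integrable_of_abs_le hκ.aestronglyMeasurable (fun z => hb z.1 z.2)
  have h1 : ∫ z, κ (g z).1 (g z).2 ∂μ = ∫ w, Function.uncurry κ w ∂(Measure.map g μ) := by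
    rw [integral_map hg.aemeasurable]
    · rfl
    · rw [hmap]; exact hκ.aestronglyMeasurable
  rw [h1, hmap, integral_prod _ hint]
  rfl

end Aux

/-- Unbiasedness of the MMD estimator. -/
theorem mmdU_unbiased
    {𝓧 : Type*} [MeasurableSpace 𝓧]
    (κ : 𝓧 → 𝓧 → ℝ) (K : ℝ)
    (hκ : Measurable (Function.uncurry κ)) (hb : ∀ x y, |κ x y| ≤ K)
    (p q : Measure 𝓧) [IsProbabilityMeasure p] [IsProbabilityMeasure q]
    {l₁ l₂ : ℕ} (hl₁ : 2 ≤ l₁) (hl₂ : 2 ≤ l₂)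
    {Ω : Type*} [MeasurableSpace Ω] (P : Measure Ω) [IsProbabilityMeasure P]
    (X : Ω → Fin l₁ → 𝓧) (Y : Ω → Fin l₂ → 𝓧)
    (hX : Measurable X) (hY : Measurable Y)
    (hlaw : Measure.map (fun ω => (X ω, Y ω)) P
      = (Measure.pi fun _ : Fin l₁ => p).prod (Measure.pi fun _ : Fin l₂ => q)) :
    ∫ ω, mmdU κ (X ω) (Y ω) ∂P = mmdSq κ p q := by
  classical
  set μ := (Measure.pi fun _ : Fin l₁ => p).prod (Measure.pi fun _ : Fin l₂ => q) with hμ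
  have hk1 : ∀ i j : Fin l₁,
      Measurable fun z : (Fin l₁ → 𝓧) × (Fin l₂ → 𝓧) => κ (z.1 i) (z.1 j) := by
    intro i j
    have hp : Measurable fun z : (Fin l₁ → 𝓧) × (Fin l₂ → 𝓧) => (z.1 i, z.1 j) :=
      ((measurable_pi_apply i).comp measurable_fst).prodMk
        ((measurable_pi_apply j).comp measurable_fst)
    exact hκ.comp hp
  have hk2 : ∀ i j : Fin l₂,
      Measurable fun z : (Fin l₁ → 𝓧) × (Fin l₂ → 𝓧) => κ (z.2 i) (z.2 j) := by
    intro i j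
    have hp : Measurable fun z : (Fin l₁ → 𝓧) × (Fin l₂ → 𝓧) => (z.2 i, z.2 j) :=
      ((measurable_pi_apply i).comp measurable_snd).prodMk
        ((measurable_pi_apply j).comp measurable_snd)
    exact hκ.comp hp
  have hk3 : ∀ (i : Fin l₁) (j : Fin l₂),
      Measurable fun z : (Fin l₁ → 𝓧) × (Fin l₂ → 𝓧) => κ (z.1 i) (z.2 j) := by
    intro i j
    have hp : Measurable fun z : (Fin l₁ → 𝓧) × (Fin l₂ → 𝓧) => (z.1 i, z.2 j) :=
      ((measurable_pi_apply i).comp measurable_fst).prodMk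
        ((measurable_pi_apply j).comp measurable_snd)
    exact hκ.comp hp
  have hmeas : Measurable fun z : (Fin l₁ → 𝓧) × (Fin l₂ → 𝓧) => mmdU κ z.1 z.2 := by
    unfold mmdU
    refine Measurable.sub (Measurable.add ?_ ?_) ?_
    · exact (Finset.measurable_sum _ fun i _ =>
        Finset.measurable_sum _ fun j _ => hk1 i j).const_mul _
    · exact (Finset.measurable_sum _ fun i _ =>
        Finset.measurable_sum _ fun j _ => hk2 i j).const_mul _
    · exact (Finset.measurable_sum _ fun i _ =>
        Finset.measurable_sum _ fun j _ => hk3 i j).const_mul _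
  have hstep : ∫ ω, mmdU κ (X ω) (Y ω) ∂P = ∫ z, mmdU κ z.1 z.2 ∂μ := by
    have h := integral_map (μ := P) (φ := fun ω => (X ω, Y ω)) (hX.prodMk hY).aemeasurable
      (f := fun z : (Fin l₁ → 𝓧) × (Fin l₂ → 𝓧) => mmdU κ z.1 z.2) hmeas.aestronglyMeasurable
    rw [hlaw] at h
    exact h.symm
  rw [hstep]
  have I1 : ∀ i j : Fin l₁,
      Integrable (fun z : (Fin l₁ → 𝓧) × (Fin l₂ → 𝓧) => κ (z.1 i) (z.1 j)) μ := fun i j =>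
    integrable_of_abs_le (hk1 i j).aestronglyMeasurable (fun z => hb _ _)
  have I2 : ∀ i j : Fin l₂,
      Integrable (fun z : (Fin l₁ → 𝓧) × (Fin l₂ → 𝓧) => κ (z.2 i) (z.2 j)) μ := fun i j =>
    integrable_of_abs_le (hk2 i j).aestronglyMeasurable (fun z => hb _ _)
  have I3 : ∀ (i : Fin l₁) (j : Fin l₂),
      Integrable (fun z : (Fin l₁ → 𝓧) × (Fin l₂ → 𝓧) => κ (z.1 i) (z.2 j)) μ := fun i j =>
    integrable_of_abs_le (hk3 i j).aestronglyMeasurable (fun z => hb _ _)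
  -- identification of the laws of pairs of coordinates
  have m1 : ∀ i j : Fin l₁, i ≠ j →
      Measure.map (fun z : (Fin l₁ → 𝓧) × (Fin l₂ → 𝓧) => (z.1 i, z.1 j)) μ = p.prod p := by
    intro i j hij
    have heq : (fun z : (Fin l₁ → 𝓧) × (Fin l₂ → 𝓧) => (z.1 i, z.1 j))
        = (fun x : Fin l₁ → 𝓧 => (x i, x j)) ∘ Prod.fst := rfl
    rw [heq, ← Measure.map_map ((measurable_pi_apply i).prodMk (measurable_pi_apply j))
      measurable_fst, Measure.map_fst_prod]
    simp only [measure_univ, one_smul]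
    exact pi_map_pair_aux p hij
  have m2 : ∀ i j : Fin l₂, i ≠ j →
      Measure.map (fun z : (Fin l₁ → 𝓧) × (Fin l₂ → 𝓧) => (z.2 i, z.2 j)) μ = q.prod q := by
    intro i j hij
    have heq : (fun z : (Fin l₁ → 𝓧) × (Fin l₂ → 𝓧) => (z.2 i, z.2 j))
        = (fun y : Fin l₂ → 𝓧 => (y i, y j)) ∘ Prod.snd := rfl
    rw [heq, ← Measure.map_map ((measurable_pi_apply i).prodMk (measurable_pi_apply j))
      measurable_snd, Measure.map_snd_prod]
    simp only [measure_univ, one_smul]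
    exact pi_map_pair_aux q hij
  have m3 : ∀ (i : Fin l₁) (j : Fin l₂),
      Measure.map (fun z : (Fin l₁ → 𝓧) × (Fin l₂ → 𝓧) => (z.1 i, z.2 j)) μ = p.prod q := by
    intro i j
    have heq : (fun z : (Fin l₁ → 𝓧) × (Fin l₂ → 𝓧) => (z.1 i, z.2 j))
        = Prod.map (fun x : Fin l₁ → 𝓧 => x i) (fun y : Fin l₂ → 𝓧 => y j) := rfl
    rw [heq, ← Measure.map_prod_map _ _ (measurable_pi_apply i) (measurable_pi_apply j),
      pi_map_eval_aux, pi_map_eval_aux]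
  -- value of each elementary integral
  have e1 : ∀ i j : Fin l₁, i ≠ j →
      (∫ z, κ (z.1 i) (z.1 j) ∂μ) = ∫ x, ∫ x', κ x x' ∂p ∂p := fun i j hij =>
    integral_comp_pair hκ hb
      (((measurable_pi_apply i).comp measurable_fst).prodMk
        ((measurable_pi_apply j).comp measurable_fst)) (m1 i j hij)
  have e2 : ∀ i j : Fin l₂, i ≠ j →
      (∫ z, κ (z.2 i) (z.2 j) ∂μ) = ∫ y, ∫ y', κ y y' ∂q ∂q := fun i j hij =>
    integral_comp_pair hκ hb
      (((measurable_pi_apply i).comp measurable_snd).prodMk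
        ((measurable_pi_apply j).comp measurable_snd)) (m2 i j hij)
  have e3 : ∀ (i : Fin l₁) (j : Fin l₂),
      (∫ z, κ (z.1 i) (z.2 j) ∂μ) = ∫ x, ∫ y, κ x y ∂q ∂p := fun i j =>
    integral_comp_pair hκ hb
      (((measurable_pi_apply i).comp measurable_fst).prodMk
        ((measurable_pi_apply j).comp measurable_snd)) (m3 i j)
  set A := ∫ x, ∫ x', κ x x' ∂p ∂p with hA
  set B := ∫ y, ∫ y', κ y y' ∂q ∂q with hB
  set C := ∫ x, ∫ y, κ x y ∂q ∂p with hC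
  have S1 : (∫ z, (∑ i : Fin l₁, ∑ j ∈ Finset.univ.erase i, κ (z.1 i) (z.1 j)) ∂μ)
      = (l₁ : ℝ) * ((l₁ : ℝ) - 1) * A := by
    rw [integral_finset_sum _ (fun i _ => integrable_finset_sum _ fun j _ => I1 i j)]
    have h : ∀ i ∈ Finset.univ,
        (∫ z, ∑ j ∈ Finset.univ.erase i, κ (z.1 i) (z.1 j) ∂μ) = ((l₁ : ℝ) - 1) * A := by
      intro i _
      rw [integral_finset_sum _ fun j _ => I1 i j,
        Finset.sum_congr rfl fun j hj => e1 i j (Finset.ne_of_mem_erase hj).symm,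
        Finset.sum_const, Finset.card_erase_of_mem (Finset.mem_univ i), Finset.card_univ,
        Fintype.card_fin, nsmul_eq_mul]
      rw [Nat.cast_sub (le_trans one_le_two hl₁)]
      norm_num
    rw [Finset.sum_congr rfl h, Finset.sum_const, Finset.card_univ, Fintype.card_fin,
      nsmul_eq_mul]
    ring
  have S2 : (∫ z, (∑ i : Fin l₂, ∑ j ∈ Finset.univ.erase i, κ (z.2 i) (z.2 j)) ∂μ)
      = (l₂ : ℝ) * ((l₂ : ℝ) - 1) * B := by
    rw [integral_finset_sum _ (fun i _ => integrable_finset_sum _ fun j _ => I2 i j)]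
    have h : ∀ i ∈ Finset.univ,
        (∫ z, ∑ j ∈ Finset.univ.erase i, κ (z.2 i) (z.2 j) ∂μ) = ((l₂ : ℝ) - 1) * B := by
      intro i _
      rw [integral_finset_sum _ fun j _ => I2 i j,
        Finset.sum_congr rfl fun j hj => e2 i j (Finset.ne_of_mem_erase hj).symm,
        Finset.sum_const, Finset.card_erase_of_mem (Finset.mem_univ i), Finset.card_univ,
        Fintype.card_fin, nsmul_eq_mul]
      rw [Nat.cast_sub (le_trans one_le_two hl₂)]
      norm_num
    rw [Finset.sum_congr rfl h, Finset.sum_const, Finset.card_univ, Fintype.card_fin,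
      nsmul_eq_mul]
    ring
  have S3 : (∫ z, (∑ i : Fin l₁, ∑ j : Fin l₂, κ (z.1 i) (z.2 j)) ∂μ)
      = (l₁ : ℝ) * (l₂ : ℝ) * C := by
    rw [integral_finset_sum _ (fun i _ => integrable_finset_sum _ fun j _ => I3 i j)]
    have h : ∀ i ∈ Finset.univ,
        (∫ z, ∑ j : Fin l₂, κ (z.1 i) (z.2 j) ∂μ) = (l₂ : ℝ) * C := by
      intro i _
      rw [integral_finset_sum _ fun j _ => I3 i j,
        Finset.sum_congr rfl fun j _ => e3 i j,
        Finset.sum_const, Finset.card_univ, Fintype.card_fin, nsmul_eq_mul]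
    rw [Finset.sum_congr rfl h, Finset.sum_const, Finset.card_univ, Fintype.card_fin,
      nsmul_eq_mul]
    ring
  have iS1 : Integrable
      (fun z : (Fin l₁ → 𝓧) × (Fin l₂ → 𝓧) =>
        ∑ i : Fin l₁, ∑ j ∈ Finset.univ.erase i, κ (z.1 i) (z.1 j)) μ :=
    integrable_finset_sum _ fun i _ => integrable_finset_sum _ fun j _ => I1 i j
  have iS2 : Integrable
      (fun z : (Fin l₁ → 𝓧) × (Fin l₂ → 𝓧) =>
        ∑ i : Fin l₂, ∑ j ∈ Finset.univ.erase i, κ (z.2 i) (z.2 j)) μ :=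
    integrable_finset_sum _ fun i _ => integrable_finset_sum _ fun j _ => I2 i j
  have iS3 : Integrable
      (fun z : (Fin l₁ → 𝓧) × (Fin l₂ → 𝓧) =>
        ∑ i : Fin l₁, ∑ j : Fin l₂, κ (z.1 i) (z.2 j)) μ :=
    integrable_finset_sum _ fun i _ => integrable_finset_sum _ fun j _ => I3 i j
  have iA : Integrable (fun z : (Fin l₁ → 𝓧) × (Fin l₂ → 𝓧) =>
      1 / ((l₁ : ℝ) * ((l₁ : ℝ) - 1)) *
        ∑ i : Fin l₁, ∑ j ∈ Finset.univ.erase i, κ (z.1 i) (z.1 j)) μ :=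
    iS1.const_mul _
  have iB : Integrable (fun z : (Fin l₁ → 𝓧) × (Fin l₂ → 𝓧) =>
      1 / ((l₂ : ℝ) * ((l₂ : ℝ) - 1)) *
        ∑ i : Fin l₂, ∑ j ∈ Finset.univ.erase i, κ (z.2 i) (z.2 j)) μ :=
    iS2.const_mul _
  have iC : Integrable (fun z : (Fin l₁ → 𝓧) × (Fin l₂ → 𝓧) =>
      2 / ((l₁ : ℝ) * (l₂ : ℝ)) * ∑ i : Fin l₁, ∑ j : Fin l₂, κ (z.1 i) (z.2 j)) μ :=
    iS3.const_mul _
  have iAB : Integrable (fun z : (Fin l₁ → 𝓧) × (Fin l₂ → 𝓧) =>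
      1 / ((l₁ : ℝ) * ((l₁ : ℝ) - 1)) *
          ∑ i : Fin l₁, ∑ j ∈ Finset.univ.erase i, κ (z.1 i) (z.1 j)
        + 1 / ((l₂ : ℝ) * ((l₂ : ℝ) - 1)) *
          ∑ i : Fin l₂, ∑ j ∈ Finset.univ.erase i, κ (z.2 i) (z.2 j)) μ :=
    iA.add iB
  simp only [mmdU, Fintype.card_fin]
  rw [integral_sub iAB iC, integral_add iA iB, integral_const_mul, integral_const_mul,
    integral_const_mul, S1, S2, S3]
  have h1 : (l₁ : ℝ) ≠ 0 := by
    have : (0:ℝ) < l₁ := by exact_mod_cast lt_of_lt_of_le (by norm_num) hl₁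
    linarith
  have h1' : (l₁ : ℝ) - 1 ≠ 0 := by
    have : (2:ℝ) ≤ l₁ := by exact_mod_cast hl₁
    linarith
  have h2 : (l₂ : ℝ) ≠ 0 := by
    have : (0:ℝ) < l₂ := by exact_mod_cast lt_of_lt_of_le (by norm_num) hl₂
    linarith
  have h2' : (l₂ : ℝ) - 1 ≠ 0 := by
    have : (2:ℝ) ≤ l₂ := by exact_mod_cast hl₂
    linarith
  rw [mmdSq]
  field_simp
  ring
end

section
/- Bounded-differences property of the MMD estimator: Let k : 𝒳 × 𝒳 → ℝ be a kernel with 0 ≤ k(x,y) ≤ K for all x, y, and let m ≥ 2. For sample vectors X = (x_1,…,x_m) and Y = (y_1,…,y_m) in 𝒳^m, if X' (respectively Y') is obtained from X (respectively Y) by replacing a single coordinate by an arbitrary element of 𝒳, then |MMD_u²[X,Y] − MMD_u²[X',Y]| ≤ 4K/m and |MMD_u²[X,Y] − MMD_u²[X,Y']| ≤ 4K/m. -/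
open MeasureTheory ProbabilityTheory Filter

private lemma abs_kdiff_le {x y K : ℝ} (hx : 0 ≤ x ∧ x ≤ K) (hy : 0 ≤ y ∧ y ≤ K) :
    |x - y| ≤ K := by
  rw [abs_sub_le_iff]
  constructor <;> linarith [hx.1, hx.2, hy.1, hy.2]

private lemma S_diff_bound {𝓧 : Type*} (κ : 𝓧 → 𝓧 → ℝ) (K : ℝ)
    (hb : ∀ x y, 0 ≤ κ x y ∧ κ x y ≤ K) {m : ℕ} (X X' : Fin m → 𝓧) (a : Fin m)
    (h : ∀ i, i ≠ a → X' i = X i) :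
    |(∑ i : Fin m, ∑ j ∈ Finset.univ.erase i, κ (X i) (X j)) -
      ∑ i : Fin m, ∑ j ∈ Finset.univ.erase i, κ (X' i) (X' j)| ≤ 2 * ((m : ℝ) - 1) * K := by
  have hm1 : 1 ≤ m := a.pos
  set d : Fin m → Fin m → ℝ := fun i j => κ (X i) (X j) - κ (X' i) (X' j) with hd_def
  have hd : ∀ i j, |d i j| ≤ K := fun i j => abs_kdiff_le (hb _ _) (hb _ _)
  have hd0 : ∀ i j, i ≠ a → j ≠ a → d i j = 0 := by
    intro i j hi hj
    simp [hd_def, h i hi, h j hj]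
  have hcount : ((Finset.univ.erase a).card : ℝ) = (m : ℝ) - 1 := by
    rw [Finset.card_erase_of_mem (Finset.mem_univ a), Finset.card_univ, Fintype.card_fin]
    push_cast [Nat.cast_sub hm1]
    ring
  calc |(∑ i : Fin m, ∑ j ∈ Finset.univ.erase i, κ (X i) (X j)) -
      ∑ i : Fin m, ∑ j ∈ Finset.univ.erase i, κ (X' i) (X' j)|
      = |∑ i : Fin m, ∑ j ∈ Finset.univ.erase i, d i j| := by
        rw [← Finset.sum_sub_distrib]
        congr 1
        refine Finset.sum_congr rfl fun i _ => ?_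
        rw [← Finset.sum_sub_distrib]
    _ ≤ ∑ i : Fin m, |∑ j ∈ Finset.univ.erase i, d i j| := Finset.abs_sum_le_sum_abs _ _
    _ ≤ ∑ i : Fin m, ∑ j ∈ Finset.univ.erase i, |d i j| :=
        Finset.sum_le_sum fun i _ => Finset.abs_sum_le_sum_abs _ _
    _ = (∑ j ∈ Finset.univ.erase a, |d a j|) +
        ∑ i ∈ Finset.univ.erase a, ∑ j ∈ Finset.univ.erase i, |d i j| :=
        (Finset.add_sum_erase _ _ (Finset.mem_univ a)).symm
    _ ≤ ((m : ℝ) - 1) * K + ((m : ℝ) - 1) * K := by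
        gcongr with hhh
        · calc ∑ j ∈ Finset.univ.erase a, |d a j| ≤ ∑ _j ∈ Finset.univ.erase a, K :=
              Finset.sum_le_sum fun j _ => hd a j
            _ = ((m : ℝ) - 1) * K := by rw [Finset.sum_const, nsmul_eq_mul, hcount]
        · calc ∑ i ∈ Finset.univ.erase a, ∑ j ∈ Finset.univ.erase i, |d i j|
              ≤ ∑ _i ∈ Finset.univ.erase a, K := by
                refine Finset.sum_le_sum fun i hi => ?_
                have hia : i ≠ a := Finset.ne_of_mem_erase hi
                have : ∑ j ∈ Finset.univ.erase i, |d i j| = |d i a| := by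
                  refine Finset.sum_eq_single_of_mem a
                    (Finset.mem_erase.2 ⟨hia.symm, Finset.mem_univ a⟩) fun j _ hja => ?_
                  rw [hd0 i j hia hja, abs_zero]
                rw [this]; exact hd i a
            _ = ((m : ℝ) - 1) * K := by rw [Finset.sum_const, nsmul_eq_mul, hcount]
    _ = 2 * ((m : ℝ) - 1) * K := by ring

private lemma T_diff_bound_left {𝓧 : Type*} (κ : 𝓧 → 𝓧 → ℝ) (K : ℝ)
    (hb : ∀ x y, 0 ≤ κ x y ∧ κ x y ≤ K) {m : ℕ} (X X' Y : Fin m → 𝓧) (a : Fin m)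
    (h : ∀ i, i ≠ a → X' i = X i) :
    |(∑ i : Fin m, ∑ j : Fin m, κ (X i) (Y j)) -
      ∑ i : Fin m, ∑ j : Fin m, κ (X' i) (Y j)| ≤ (m : ℝ) * K := by
  rw [← Finset.sum_sub_distrib]
  have h1 : ∑ i : Fin m, ((∑ j : Fin m, κ (X i) (Y j)) - ∑ j : Fin m, κ (X' i) (Y j))
      = (∑ j : Fin m, κ (X a) (Y j)) - ∑ j : Fin m, κ (X' a) (Y j) :=
    Finset.sum_eq_single_of_mem a (Finset.mem_univ a) fun i _ hia => by rw [h i hia]; ring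
  rw [h1, ← Finset.sum_sub_distrib]
  calc |∑ j : Fin m, (κ (X a) (Y j) - κ (X' a) (Y j))|
      ≤ ∑ j : Fin m, |κ (X a) (Y j) - κ (X' a) (Y j)| := Finset.abs_sum_le_sum_abs _ _
    _ ≤ ∑ _j : Fin m, K := Finset.sum_le_sum fun j _ => abs_kdiff_le (hb _ _) (hb _ _)
    _ = (m : ℝ) * K := by
        rw [Finset.sum_const, nsmul_eq_mul, Finset.card_univ, Fintype.card_fin]

private lemma T_diff_bound_right {𝓧 : Type*} (κ : 𝓧 → 𝓧 → ℝ) (K : ℝ)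
    (hb : ∀ x y, 0 ≤ κ x y ∧ κ x y ≤ K) {m : ℕ} (X Y Y' : Fin m → 𝓧) (a : Fin m)
    (h : ∀ j, j ≠ a → Y' j = Y j) :
    |(∑ i : Fin m, ∑ j : Fin m, κ (X i) (Y j)) -
      ∑ i : Fin m, ∑ j : Fin m, κ (X i) (Y' j)| ≤ (m : ℝ) * K := by
  rw [← Finset.sum_sub_distrib]
  have : ∀ i : Fin m, (∑ j : Fin m, κ (X i) (Y j)) - ∑ j : Fin m, κ (X i) (Y' j)
      = κ (X i) (Y a) - κ (X i) (Y' a) := by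
    intro i
    rw [← Finset.sum_sub_distrib]
    exact Finset.sum_eq_single_of_mem a (Finset.mem_univ a) fun j _ hja => by rw [h j hja]; ring
  calc |∑ i : Fin m, ((∑ j : Fin m, κ (X i) (Y j)) - ∑ j : Fin m, κ (X i) (Y' j))|
      = |∑ i : Fin m, (κ (X i) (Y a) - κ (X i) (Y' a))| := by
        congr 1; exact Finset.sum_congr rfl fun i _ => this i
    _ ≤ ∑ i : Fin m, |κ (X i) (Y a) - κ (X i) (Y' a)| := Finset.abs_sum_le_sum_abs _ _
    _ ≤ ∑ _i : Fin m, K := Finset.sum_le_sum fun i _ => abs_kdiff_le (hb _ _) (hb _ _)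
    _ = (m : ℝ) * K := by
        rw [Finset.sum_const, nsmul_eq_mul, Finset.card_univ, Fintype.card_fin]

/-- Bounded-differences property of the MMD estimator. -/
theorem mmdU_bounded_differences
    {𝓧 : Type*} (κ : 𝓧 → 𝓧 → ℝ) (K : ℝ)
    (hb : ∀ x y, 0 ≤ κ x y ∧ κ x y ≤ K)
    {m : ℕ} (hm : 2 ≤ m)
    (X Y : Fin m → 𝓧) (a : Fin m) (xt yt : 𝓧) :
    |mmdU κ X Y - mmdU κ (Function.update X a xt) Y| ≤ 4 * K / m ∧
      |mmdU κ X Y - mmdU κ X (Function.update Y a yt)| ≤ 4 * K / m := by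
  have hK : 0 ≤ K := le_trans (hb xt xt).1 (hb xt xt).2
  have hM : (2 : ℝ) ≤ (m : ℝ) := by exact_mod_cast hm
  have hM0 : (0 : ℝ) < (m : ℝ) := by linarith
  have hM1 : (0 : ℝ) < (m : ℝ) - 1 := by linarith
  have hc1 : (0 : ℝ) ≤ 1 / ((m : ℝ) * ((m : ℝ) - 1)) := by positivity
  have hc2 : (0 : ℝ) ≤ 2 / ((m : ℝ) * (m : ℝ)) := by positivity
  have harith : 1 / ((m : ℝ) * ((m : ℝ) - 1)) * (2 * ((m : ℝ) - 1) * K)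
      + 2 / ((m : ℝ) * (m : ℝ)) * ((m : ℝ) * K) = 4 * K / m := by
    field_simp
    ring
  constructor
  · set X' := Function.update X a xt with hX'def
    have hX' : ∀ i, i ≠ a → X' i = X i := fun i hi => Function.update_of_ne hi _ _
    have hS := S_diff_bound κ K hb X X' a hX'
    have hT := T_diff_bound_left κ K hb X X' Y a hX'
    have key : mmdU κ X Y - mmdU κ X' Y
        = 1 / ((m : ℝ) * ((m : ℝ) - 1)) *
            ((∑ i : Fin m, ∑ j ∈ Finset.univ.erase i, κ (X i) (X j)) -
              ∑ i : Fin m, ∑ j ∈ Finset.univ.erase i, κ (X' i) (X' j))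
          - 2 / ((m : ℝ) * (m : ℝ)) *
            ((∑ i : Fin m, ∑ j : Fin m, κ (X i) (Y j)) -
              ∑ i : Fin m, ∑ j : Fin m, κ (X' i) (Y j)) := by
      simp only [mmdU, Fintype.card_fin]
      ring
    rw [key]
    calc _ ≤ |1 / ((m : ℝ) * ((m : ℝ) - 1)) *
            ((∑ i : Fin m, ∑ j ∈ Finset.univ.erase i, κ (X i) (X j)) -
              ∑ i : Fin m, ∑ j ∈ Finset.univ.erase i, κ (X' i) (X' j))|
          + |2 / ((m : ℝ) * (m : ℝ)) *
            ((∑ i : Fin m, ∑ j : Fin m, κ (X i) (Y j)) -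
              ∑ i : Fin m, ∑ j : Fin m, κ (X' i) (Y j))| := abs_sub _ _
      _ ≤ 1 / ((m : ℝ) * ((m : ℝ) - 1)) * (2 * ((m : ℝ) - 1) * K)
          + 2 / ((m : ℝ) * (m : ℝ)) * ((m : ℝ) * K) := by
          rw [abs_mul, abs_mul, abs_of_nonneg hc1, abs_of_nonneg hc2]
          exact add_le_add (mul_le_mul_of_nonneg_left hS hc1)
            (mul_le_mul_of_nonneg_left hT hc2)
      _ = 4 * K / m := harith
  · set Y' := Function.update Y a yt with hY'def
    have hY' : ∀ i, i ≠ a → Y' i = Y i := fun i hi => Function.update_of_ne hi _ _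
    have hS := S_diff_bound κ K hb Y Y' a hY'
    have hT := T_diff_bound_right κ K hb X Y Y' a hY'
    have key : mmdU κ X Y - mmdU κ X Y'
        = 1 / ((m : ℝ) * ((m : ℝ) - 1)) *
            ((∑ i : Fin m, ∑ j ∈ Finset.univ.erase i, κ (Y i) (Y j)) -
              ∑ i : Fin m, ∑ j ∈ Finset.univ.erase i, κ (Y' i) (Y' j))
          - 2 / ((m : ℝ) * (m : ℝ)) *
            ((∑ i : Fin m, ∑ j : Fin m, κ (X i) (Y j)) -
              ∑ i : Fin m, ∑ j : Fin m, κ (X i) (Y' j)) := by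
      simp only [mmdU, Fintype.card_fin]
      ring
    rw [key]
    calc _ ≤ |1 / ((m : ℝ) * ((m : ℝ) - 1)) *
            ((∑ i : Fin m, ∑ j ∈ Finset.univ.erase i, κ (Y i) (Y j)) -
              ∑ i : Fin m, ∑ j ∈ Finset.univ.erase i, κ (Y' i) (Y' j))|
          + |2 / ((m : ℝ) * (m : ℝ)) *
            ((∑ i : Fin m, ∑ j : Fin m, κ (X i) (Y j)) -
              ∑ i : Fin m, ∑ j : Fin m, κ (X i) (Y' j))| := abs_sub _ _
      _ ≤ 1 / ((m : ℝ) * ((m : ℝ) - 1)) * (2 * ((m : ℝ) - 1) * K)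
          + 2 / ((m : ℝ) * (m : ℝ)) * ((m : ℝ) * K) := by
          rw [abs_mul, abs_mul, abs_of_nonneg hc1, abs_of_nonneg hc2]
          exact add_le_add (mul_le_mul_of_nonneg_left hS hc1)
            (mul_le_mul_of_nonneg_left hT hc2)
      _ = 4 * K / m := harith
end

section
/- Pairwise comparison concentration bound (with reference sequence): Let p, q be probability measures on a measurable space 𝒳 with MMD²[p,q] > 0 for a measurable kernel k satisfying 0 ≤ k(x,y) ≤ K. Let m ≥ 2 and let X, Y_k be i.i.d. m-samples from p and Y_1 an i.i.d. m-sample from q, with X, Y_1, Y_k mutually independent. Then P( MMD_u²[X,Y_k] > MMD_u²[X,Y_1] ) ≤ exp( − m · MMD⁴[p,q] / (24K²) ), where MMD⁴[p,q] = (MMD²[p,q])². -/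
open MeasureTheory ProbabilityTheory Filter

/-!
Write `D = MMD_u²[X, Y_k] - MMD_u²[X, Y_1]` as a function of the `3m` independent coordinates of
`(X, Y_1, Y_k)`. The U-statistic `mmdU` is unbiased, so `𝔼 D = MMD²[p, p] - MMD²[p, q] =
-MMD²[p, q]`. Replacing a single coordinate moves `D` by at most `4K/m`, hence by McDiarmid's
inequality `D - 𝔼 D` has a sub-Gaussian moment generating function with variance proxy
`3m (2K/m)² = 12K²/m`. McDiarmid's inequality itself follows by conditioning on one coordinate at
a time and applying Hoeffding's lemma to the conditional expectation. The Chernoff bound at level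
`MMD²[p, q]` gives `exp (-m MMD⁴[p, q] / (24 K²))`.
-/

open Finset Function Real
open scoped NNReal

section McDiarmid

variable {α β : Type*} [MeasurableSpace α] [MeasurableSpace β]

lemma integral_sub_integral_le_of_forall_sub_le {μ : Measure α} [IsProbabilityMeasure μ]
    {f g : α → ℝ} (hf : Integrable f μ) (hg : Integrable g μ) {c : ℝ} (h : ∀ x, f x - g x ≤ c) :
    ∫ x, f x ∂μ - ∫ x, g x ∂μ ≤ c := by
  rw [← integral_sub hf hg]
  simpa using integral_mono (hf.sub hg) (integrable_const c) h

lemma hasSubgaussianMGF_sub_integral_of_forall_sub_le {μ : Measure α} [IsProbabilityMeasure μ]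
    {g : α → ℝ} (hg : Measurable g) {c : ℝ≥0} (hc : ∀ a a', g a - g a' ≤ c) :
    HasSubgaussianMGF (fun a ↦ g a - ∫ a', g a' ∂μ) ((c / 2) ^ 2) μ := by
  have := nonempty_of_isProbabilityMeasure μ
  have hbdd : BddBelow (Set.range g) := ⟨g this.some - c, by
    rintro _ ⟨a, rfl⟩
    linarith [hc this.some a]⟩
  have hmem : ∀ a, g a ∈ Set.Icc (⨅ a', g a') ((⨅ a', g a') + c) := fun a ↦
    ⟨ciInf_le hbdd a, by linarith [le_ciInf fun a' ↦ (by linarith [hc a a'] : g a - c ≤ g a')]⟩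
  simpa using hasSubgaussianMGF_of_mem_Icc hg.aemeasurable (ae_of_all μ hmem)

lemma hasSubgaussianMGF_prod {μ : Measure α} {ν : Measure β} [IsProbabilityMeasure μ]
    [IsProbabilityMeasure ν] {f : α × β → ℝ} (hf : Measurable f) {C : ℝ} (hC : ∀ z, |f z| ≤ C)
    {c₁ c₂ : ℝ≥0}
    (h₁ : HasSubgaussianMGF (fun a ↦ ∫ b, f (a, b) ∂ν - ∫ z, f z ∂μ.prod ν) c₁ μ)
    (h₂ : ∀ a, HasSubgaussianMGF (fun b ↦ f (a, b) - ∫ b', f (a, b') ∂ν) c₂ ν) :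
    HasSubgaussianMGF (fun z ↦ f z - ∫ z', f z' ∂μ.prod ν) (c₁ + c₂) (μ.prod ν) := by
  set E := ∫ z, f z ∂μ.prod ν
  set g := fun a ↦ ∫ b, f (a, b) ∂ν
  have hint : ∀ t, Integrable (fun z ↦ exp (t * (f z - E))) (μ.prod ν) := fun t ↦
    integrable_exp_mul_of_mem_Icc (hf.sub_const E).aemeasurable (ae_of_all _ fun z ↦
      abs_le.mp ((abs_sub _ _).trans (add_le_add_left (hC z) _)))
  refine ⟨hint, fun t ↦ ?_⟩
  have hsplit : ∀ a b,
      exp (t * (f (a, b) - E)) = exp (t * (f (a, b) - g a)) * exp (t * (g a - E)) :=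
    fun a b ↦ by rw [← exp_add]; ring_nf
  calc mgf (fun z ↦ f z - E) (μ.prod ν) t
      = ∫ a, mgf (fun b ↦ f (a, b) - g a) ν t * exp (t * (g a - E)) ∂μ := by
        simp_rw [mgf, integral_prod _ (hint t), hsplit, integral_mul_const]
    _ ≤ ∫ a, exp (c₂ * t ^ 2 / 2) * exp (t * (g a - E)) ∂μ :=
        integral_mono_of_nonneg (ae_of_all _ fun a ↦ mul_nonneg (mgf_nonneg) (exp_pos _).le)
          ((h₁.integrable_exp_mul t).const_mul _)
          (ae_of_all _ fun a ↦ mul_le_mul_of_nonneg_right ((h₂ a).mgf_le t) (exp_pos _).le)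
    _ = exp (c₂ * t ^ 2 / 2) * mgf (fun a ↦ g a - E) μ t := integral_const_mul _ _
    _ ≤ exp (c₂ * t ^ 2 / 2) * exp (c₁ * t ^ 2 / 2) := by gcongr; exact h₁.mgf_le t
    _ = exp (↑(c₁ + c₂) * t ^ 2 / 2) := by rw [← exp_add]; push_cast; ring_nf

lemma measure_pos_le_of_hasSubgaussianMGF {μ : Measure α} [IsFiniteMeasure μ] {D : α → ℝ}
    {c : ℝ≥0} (h : HasSubgaussianMGF (fun a ↦ D a - ∫ a', D a' ∂μ) c μ) (hD : ∫ a, D a ∂μ ≤ 0) :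
    μ {a | 0 < D a} ≤ ENNReal.ofReal (exp (-(∫ a, D a ∂μ) ^ 2 / (2 * c))) := by
  calc μ {a | 0 < D a} ≤ μ {a | -∫ a', D a' ∂μ ≤ D a - ∫ a', D a' ∂μ} :=
        measure_mono fun a (ha : 0 < D a) ↦
          show -∫ a', D a' ∂μ ≤ D a - ∫ a', D a' ∂μ by linarith
    _ = ENNReal.ofReal (μ.real {a | -∫ a', D a' ∂μ ≤ D a - ∫ a', D a' ∂μ}) :=
        (ofReal_measureReal (measure_ne_top _ _)).symm
    _ ≤ _ := by simpa using ENNReal.ofReal_le_ofReal (h.measure_ge_le (neg_nonneg.2 hD))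

-- One-sided, but equivalent to the two-sided condition since `x` and `v` range over everything.
def HasBoundedDifferences {ι : Type*} [DecidableEq ι] {𝒳 : ι → Type*}
    (f : (Π i, 𝒳 i) → ℝ) (c : ι → ℝ≥0) : Prop :=
  ∀ x i v, f x - f (Function.update x i v) ≤ c i

theorem hasSubgaussianMGF_of_hasBoundedDifferences {n : ℕ} {𝒳 : Fin n → Type*}
    [∀ i, MeasurableSpace (𝒳 i)] (μ : ∀ i, Measure (𝒳 i)) [∀ i, IsProbabilityMeasure (μ i)]
    {f : (Π i, 𝒳 i) → ℝ} (hf : Measurable f) {C : ℝ} (hC : ∀ x, |f x| ≤ C) {c : Fin n → ℝ≥0}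
    (hc : HasBoundedDifferences f c) :
    HasSubgaussianMGF (fun x ↦ f x - ∫ y, f y ∂Measure.pi μ) (∑ i, (c i / 2) ^ 2)
      (Measure.pi μ) := by
  induction n with
  | zero =>
    have hconst : (fun x ↦ f x - ∫ y, f y ∂Measure.pi μ) = fun _ ↦ 0 := by
      ext x
      simp only [Subsingleton.elim _ x, integral_const, probReal_univ, one_smul, sub_self]
    simp [hconst]
  | succ n ih =>
    let e := MeasurableEquiv.piFinSuccAbove 𝒳 0
    let ν := Measure.pi fun j ↦ μ (Fin.succAbove 0 j)
    have he : MeasurePreserving e (Measure.pi μ) ((μ 0).prod ν) :=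
      measurePreserving_piFinSuccAbove μ 0
    let F : 𝒳 0 × (Π j, 𝒳 (Fin.succAbove 0 j)) → ℝ := fun z ↦ f (Fin.insertNth 0 z.1 z.2)
    have hF : Measurable F := hf.comp e.symm.measurable
    have hFC : ∀ z, |F z| ≤ C := fun z ↦ hC _
    have hsec : ∀ v, Integrable (fun y ↦ F (v, y)) ν := fun v ↦
      .of_bound (hF.comp measurable_prodMk_left).aestronglyMeasurable C (ae_of_all _ fun y ↦ hFC _)
    have h₁ := hasSubgaussianMGF_sub_integral_of_forall_sub_le (μ := μ 0) (c := c 0)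
      hF.stronglyMeasurable.integral_prod_right'.measurable fun v v' ↦
        integral_sub_integral_le_of_forall_sub_le (hsec v) (hsec v') fun y ↦ by
          simpa [F] using hc (Fin.insertNth 0 v y) 0 v'
    rw [← integral_prod _ (.of_bound hF.aestronglyMeasurable C (ae_of_all _ hFC))] at h₁
    have h₂ : ∀ v, HasSubgaussianMGF (fun y ↦ F (v, y) - ∫ y', F (v, y') ∂ν)
        (∑ j, (c (Fin.succAbove 0 j) / 2) ^ 2) ν := fun v ↦
      ih (f := fun y ↦ F (v, y)) _ (hF.comp measurable_prodMk_left) (fun y ↦ hFC _) fun y j w ↦ by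
        simpa only [F, Fin.insertNth_update] using hc (Fin.insertNth 0 v y) (Fin.succAbove 0 j) w
    have hFe : ∀ x, F (e x) = f x := fun x ↦ congrArg f (e.symm_apply_apply x)
    have hE : ∫ z, F z ∂(μ 0).prod ν = ∫ x, f x ∂Measure.pi μ := by
      simp_rw [← he.integral_comp' F, hFe]
    have h := hasSubgaussianMGF_prod hF hFC h₁ h₂
    rw [hE, ← he.map_eq] at h
    rw [Fin.sum_univ_succAbove _ 0]
    convert h.of_map he.aemeasurable using 2 with x
    simp only [Function.comp_apply, hFe]

theorem hasSubgaussianMGF_prod_of_hasBoundedDifferences {n : ℕ} {𝒳 : Fin n → Type*}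
    [∀ i, MeasurableSpace (𝒳 i)] (μ : ∀ i, Measure (𝒳 i)) [∀ i, IsProbabilityMeasure (μ i)]
    {ν : Measure β} [IsProbabilityMeasure ν] {f : (Π i, 𝒳 i) × β → ℝ} (hf : Measurable f)
    {C : ℝ} (hC : ∀ z, |f z| ≤ C) {c : Fin n → ℝ≥0}
    (hc : ∀ b, HasBoundedDifferences (fun x ↦ f (x, b)) c) {c₂ : ℝ≥0}
    (h₂ : ∀ x, HasSubgaussianMGF (fun b ↦ f (x, b) - ∫ b', f (x, b') ∂ν) c₂ ν) :
    HasSubgaussianMGF (fun z ↦ f z - ∫ z', f z' ∂(Measure.pi μ).prod ν)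
      (∑ i, (c i / 2) ^ 2 + c₂) ((Measure.pi μ).prod ν) := by
  have hsec : ∀ x, Integrable (fun b ↦ f (x, b)) ν := fun x ↦
    .of_bound (hf.comp measurable_prodMk_left).aestronglyMeasurable C (ae_of_all _ fun b ↦ hC _)
  have hgC : ∀ x, |∫ b, f (x, b) ∂ν| ≤ C := fun x ↦ by
    simpa using norm_integral_le_of_norm_le_const (μ := ν) (f := fun b ↦ f (x, b))
      (ae_of_all _ fun b ↦ hC (x, b))
  have h₁ := hasSubgaussianMGF_of_hasBoundedDifferences μ
    hf.stronglyMeasurable.integral_prod_right'.measurable hgC fun x i v ↦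
      integral_sub_integral_le_of_forall_sub_le (hsec _) (hsec _) fun b ↦ hc b x i v
  rw [← integral_prod _ (.of_bound hf.aestronglyMeasurable C (ae_of_all _ hC))] at h₁
  exact hasSubgaussianMGF_prod hf hC h₁ h₂

end McDiarmid

section PairIntegrals

variable {𝓧 : Type*} [MeasurableSpace 𝓧] {ι ι' : Type*} [Fintype ι] [Fintype ι']

lemma integral_apply_apply_pi (μ : ι → Measure 𝓧) [∀ i, IsProbabilityMeasure (μ i)]
    {φ : 𝓧 → 𝓧 → ℝ} {i j : ι} (hij : i ≠ j) (hφ : Integrable (uncurry φ) ((μ i).prod (μ j))) :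
    ∫ x, φ (x i) (x j) ∂Measure.pi μ = ∫ a, ∫ b, φ a b ∂μ j ∂μ i := by
  have hind : IndepFun (fun x : ι → 𝓧 ↦ x i) (fun x ↦ x j) (Measure.pi μ) :=
    (iIndepFun_pi (μ := μ) (X := fun _ ↦ id) fun _ ↦ aemeasurable_id).indepFun hij
  have hmap : (Measure.pi μ).map (fun x ↦ (x i, x j)) = (μ i).prod (μ j) := by
    rw [hind.map_prod_eq_prod_map_map (measurable_pi_apply i).aemeasurable
      (measurable_pi_apply j).aemeasurable,
      (measurePreserving_eval μ i).map_eq, (measurePreserving_eval μ j).map_eq]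
  rw [integral_integral hφ, ← hmap, integral_map (by fun_prop) (hmap ▸ hφ.aestronglyMeasurable)]

lemma integral_apply_apply_pi_prod_pi (μ : ι → Measure 𝓧) (ν : ι' → Measure 𝓧)
    [∀ i, IsProbabilityMeasure (μ i)] [∀ j, IsProbabilityMeasure (ν j)] {φ : 𝓧 → 𝓧 → ℝ}
    (i : ι) (j : ι') (hφ : Integrable (uncurry φ) ((μ i).prod (ν j))) :
    ∫ z, φ (z.1 i) (z.2 j) ∂(Measure.pi μ).prod (Measure.pi ν) = ∫ a, ∫ b, φ a b ∂ν j ∂μ i := by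
  have hmap : ((Measure.pi μ).prod (Measure.pi ν)).map (Prod.map (eval i) (eval j))
      = (μ i).prod (ν j) := by
    rw [← Measure.map_prod_map _ _ (by fun_prop) (by fun_prop),
      (measurePreserving_eval μ i).map_eq, (measurePreserving_eval ν j).map_eq]
  rw [integral_integral hφ, ← hmap, integral_map (by fun_prop) (hmap ▸ hφ.aestronglyMeasurable)]
  rfl

end PairIntegrals

section UStatistic

variable {𝓧 : Type*} {ι ι' : Type*} [Fintype ι] [Fintype ι'] (κ : 𝓧 → 𝓧 → ℝ)

def offDiagSum [DecidableEq ι] (X : ι → 𝓧) : ℝ := ∑ i, ∑ j ∈ univ.erase i, κ (X i) (X j)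

def crossSum (X : ι → 𝓧) (Y : ι' → 𝓧) : ℝ := ∑ i, ∑ j, κ (X i) (Y j)

lemma mmdU_eq [DecidableEq ι] [DecidableEq ι'] (X : ι → 𝓧) (Y : ι' → 𝓧) :
    mmdU κ X Y = offDiagSum κ X / (Fintype.card ι * (Fintype.card ι - 1))
      + offDiagSum κ Y / (Fintype.card ι' * (Fintype.card ι' - 1))
      - 2 * crossSum κ X Y / (Fintype.card ι * Fintype.card ι') := by
  simp only [mmdU, offDiagSum, crossSum]
  ring

variable {κ}

section Bounds

variable {C : ℝ} (hC : ∀ a b, |κ a b| ≤ C)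
include hC

lemma abs_offDiagSum_le [DecidableEq ι] (X : ι → 𝓧) :
    |offDiagSum κ X| ≤ Fintype.card ι * (Fintype.card ι - 1) * C := by
  calc |offDiagSum κ X| ≤ ∑ i, ∑ j ∈ univ.erase i, C :=
        (abs_sum_le_sum_abs _ _).trans <| sum_le_sum fun i _ ↦
          (abs_sum_le_sum_abs _ _).trans <| sum_le_sum fun j _ ↦ hC _ _
    _ = Fintype.card ι * (Fintype.card ι - 1) * C := by
      rcases isEmpty_or_nonempty ι with hι | ⟨⟨i⟩⟩
      · simp
      · simp only [sum_const, mem_univ, card_erase_of_mem, card_univ, nsmul_eq_mul,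
          Nat.cast_sub (Fintype.card_pos_iff.2 ⟨i⟩), Nat.cast_one]
        ring

lemma abs_crossSum_le (X : ι → 𝓧) (Y : ι' → 𝓧) :
    |crossSum κ X Y| ≤ Fintype.card ι * Fintype.card ι' * C := by
  calc |crossSum κ X Y| ≤ ∑ i : ι, ∑ j : ι', C :=
        (abs_sum_le_sum_abs _ _).trans <| sum_le_sum fun i _ ↦
          (abs_sum_le_sum_abs _ _).trans <| sum_le_sum fun j _ ↦ hC _ _
    _ = Fintype.card ι * Fintype.card ι' * C := by
      simp only [sum_const, card_univ, nsmul_eq_mul]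
      ring

lemma abs_mmdU_le [DecidableEq ι] [DecidableEq ι'] (h₁ : 2 ≤ Fintype.card ι)
    (h₂ : 2 ≤ Fintype.card ι') (X : ι → 𝓧) (Y : ι' → 𝓧) : |mmdU κ X Y| ≤ 4 * C := by
  have hn₁ : (2 : ℝ) ≤ Fintype.card ι := by exact_mod_cast h₁
  have hn₂ : (2 : ℝ) ≤ Fintype.card ι' := by exact_mod_cast h₂
  have hd₁ : (0 : ℝ) < Fintype.card ι * (Fintype.card ι - 1) := by nlinarith
  have hd₂ : (0 : ℝ) < Fintype.card ι' * (Fintype.card ι' - 1) := by nlinarith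
  have hd₃ : (0 : ℝ) < Fintype.card ι * Fintype.card ι' := by positivity
  have hX : |offDiagSum κ X / (Fintype.card ι * (Fintype.card ι - 1))| ≤ C := by
    rw [abs_div, abs_of_pos hd₁, div_le_iff₀ hd₁]
    linarith [abs_offDiagSum_le hC X]
  have hY : |offDiagSum κ Y / (Fintype.card ι' * (Fintype.card ι' - 1))| ≤ C := by
    rw [abs_div, abs_of_pos hd₂, div_le_iff₀ hd₂]
    linarith [abs_offDiagSum_le hC Y]
  have hXY : |2 * crossSum κ X Y / (Fintype.card ι * Fintype.card ι')| ≤ 2 * C := by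
    rw [abs_div, abs_mul, abs_two, abs_of_pos hd₃, div_le_iff₀ hd₃]
    linarith [abs_crossSum_le hC X Y]
  rw [mmdU_eq]
  exact (abs_sub _ _).trans <| (add_le_add (abs_add_le _ _) le_rfl).trans <| by linarith

end Bounds

section Measurability

variable [MeasurableSpace 𝓧] (hκ : Measurable (uncurry κ))
include hκ

lemma measurable_offDiagSum [DecidableEq ι] : Measurable (offDiagSum κ : (ι → 𝓧) → ℝ) := by
  unfold offDiagSum
  fun_prop

lemma measurable_crossSum : Measurable (uncurry (crossSum κ : (ι → 𝓧) → (ι' → 𝓧) → ℝ)) := by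
  unfold crossSum
  fun_prop

end Measurability

section Unbiased

variable [MeasurableSpace 𝓧] {C : ℝ} (hκ : Measurable (uncurry κ)) (hC : ∀ a b, |κ a b| ≤ C)
include hκ hC

lemma integral_offDiagSum [DecidableEq ι] (p : Measure 𝓧) [IsProbabilityMeasure p] :
    ∫ x, offDiagSum κ x ∂Measure.pi (fun _ : ι ↦ p)
      = Fintype.card ι * (Fintype.card ι - 1) * ∫ a, ∫ b, κ a b ∂p ∂p := by
  have hint : ∀ i j, Integrable (fun x : ι → 𝓧 ↦ κ (x i) (x j)) (Measure.pi fun _ ↦ p) :=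
    fun i j ↦ .of_bound (by fun_prop : Measurable _).aestronglyMeasurable C
      (ae_of_all _ fun x ↦ hC _ _)
  have hκp : Integrable (uncurry κ) (p.prod p) :=
    .of_bound hκ.aestronglyMeasurable C (ae_of_all _ fun z ↦ hC _ _)
  simp only [offDiagSum]
  rw [integral_finsetSum _ fun i _ ↦ integrable_finsetSum _ fun j _ ↦ hint i j]
  simp_rw [integral_finsetSum _ fun j _ ↦ hint _ j]
  rw [sum_congr rfl fun i _ ↦ sum_congr rfl fun j hj ↦
    integral_apply_apply_pi _ (ne_of_mem_erase hj).symm hκp]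
  rcases isEmpty_or_nonempty ι with hι | ⟨⟨i⟩⟩
  · simp
  · simp only [sum_const, mem_univ, card_erase_of_mem, card_univ, nsmul_eq_mul,
      Nat.cast_sub (Fintype.card_pos_iff.2 ⟨i⟩), Nat.cast_one]
    ring

lemma integral_crossSum (p q : Measure 𝓧) [IsProbabilityMeasure p] [IsProbabilityMeasure q] :
    ∫ z, crossSum κ z.1 z.2 ∂(Measure.pi fun _ : ι ↦ p).prod (Measure.pi fun _ : ι' ↦ q)
      = Fintype.card ι * Fintype.card ι' * ∫ a, ∫ b, κ a b ∂q ∂p := by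
  have hint : ∀ i j, Integrable (fun z : (ι → 𝓧) × (ι' → 𝓧) ↦ κ (z.1 i) (z.2 j))
      ((Measure.pi fun _ ↦ p).prod (Measure.pi fun _ ↦ q)) :=
    fun i j ↦ .of_bound (by fun_prop : Measurable _).aestronglyMeasurable C
      (ae_of_all _ fun x ↦ hC _ _)
  have hκpq : Integrable (uncurry κ) (p.prod q) :=
    .of_bound hκ.aestronglyMeasurable C (ae_of_all _ fun z ↦ hC _ _)
  simp only [crossSum]
  rw [integral_finsetSum _ fun i _ ↦ integrable_finsetSum _ fun j _ ↦ hint i j]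
  simp_rw [integral_finsetSum _ fun j _ ↦ hint _ j]
  simp only [integral_apply_apply_pi_prod_pi (fun _ : ι ↦ p) (fun _ : ι' ↦ q) _ _ hκpq, sum_const,
    card_univ, nsmul_eq_mul]
  ring

theorem integral_mmdU [DecidableEq ι] [DecidableEq ι'] (h₁ : 2 ≤ Fintype.card ι)
    (h₂ : 2 ≤ Fintype.card ι') (p q : Measure 𝓧) [IsProbabilityMeasure p]
    [IsProbabilityMeasure q] :
    ∫ z, mmdU κ z.1 z.2 ∂(Measure.pi fun _ : ι ↦ p).prod (Measure.pi fun _ : ι' ↦ q)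
      = mmdSq κ p q := by
  have hn₁ : (2 : ℝ) ≤ Fintype.card ι := by exact_mod_cast h₁
  have hn₂ : (2 : ℝ) ≤ Fintype.card ι' := by exact_mod_cast h₂
  have iA₁ : Integrable (fun z : (ι → 𝓧) × (ι' → 𝓧) ↦ offDiagSum κ z.1)
      ((Measure.pi fun _ ↦ p).prod (Measure.pi fun _ ↦ q)) :=
    .of_bound ((measurable_offDiagSum hκ).comp measurable_fst).aestronglyMeasurable _
      (ae_of_all _ fun z ↦ abs_offDiagSum_le hC z.1)
  have iA₂ : Integrable (fun z : (ι → 𝓧) × (ι' → 𝓧) ↦ offDiagSum κ z.2)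
      ((Measure.pi fun _ ↦ p).prod (Measure.pi fun _ ↦ q)) :=
    .of_bound ((measurable_offDiagSum hκ).comp measurable_snd).aestronglyMeasurable _
      (ae_of_all _ fun z ↦ abs_offDiagSum_le hC z.2)
  have iB : Integrable (fun z : (ι → 𝓧) × (ι' → 𝓧) ↦ crossSum κ z.1 z.2)
      ((Measure.pi fun _ ↦ p).prod (Measure.pi fun _ ↦ q)) :=
    .of_bound (measurable_crossSum hκ).aestronglyMeasurable _
      (ae_of_all _ fun z ↦ abs_crossSum_le hC z.1 z.2)
  simp_rw [mmdU_eq]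
  rw [integral_sub (f := fun z ↦ _ + _) ((iA₁.div_const _).add (iA₂.div_const _))
      ((iB.const_mul 2).div_const _),
    integral_add (iA₁.div_const _) (iA₂.div_const _), integral_div, integral_div, integral_div,
    integral_const_mul, integral_fun_fst, integral_fun_snd, integral_offDiagSum hκ hC,
    integral_offDiagSum hκ hC, integral_crossSum hκ hC, mmdSq]
  have : (Fintype.card ι : ℝ) - 1 ≠ 0 := by linarith
  have : (Fintype.card ι' : ℝ) - 1 ≠ 0 := by linarith
  have : (Fintype.card ι : ℝ) ≠ 0 := by linarith
  have : (Fintype.card ι' : ℝ) ≠ 0 := by linarith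
  simp only [probReal_univ, one_smul]
  field_simp
  ring

end Unbiased

lemma crossSum_update_left [DecidableEq ι] (X : ι → 𝓧) (Y : ι' → 𝓧) (i : ι) (v : 𝓧) :
    crossSum κ (update X i v) Y = crossSum κ X Y + ∑ j, (κ v (Y j) - κ (X i) (Y j)) := by
  rw [← sub_eq_iff_eq_add', crossSum, crossSum, ← sum_sub_distrib,
    Fintype.sum_eq_single i fun i' h ↦ by simp [update_of_ne h], update_self, sum_sub_distrib]

lemma crossSum_update_right [DecidableEq ι'] (X : ι → 𝓧) (Y : ι' → 𝓧) (j : ι') (v : 𝓧) :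
    crossSum κ X (update Y j v) = crossSum κ X Y + ∑ i, (κ (X i) v - κ (X i) (Y j)) := by
  rw [← sub_eq_iff_eq_add', crossSum, crossSum, ← sum_sub_distrib]
  refine sum_congr rfl fun i _ ↦ ?_
  rw [← sum_sub_distrib, Fintype.sum_eq_single j fun j' h ↦ by simp [update_of_ne h], update_self]

section Oscillation

variable {K : ℝ≥0} (hK : ∀ a b a' b', κ a b - κ a' b' ≤ K)
include hK

lemma sum_sub_le_card_mul {α : Type*} (s : Finset α) (a b c d : α → 𝓧) :
    ∑ x ∈ s, (κ (a x) (b x) - κ (c x) (d x)) ≤ #s * K := by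
  simpa using sum_le_card_nsmul s _ _ fun x _ ↦ hK (a x) (b x) (c x) (d x)

lemma offDiagSum_sub_offDiagSum_update_le [DecidableEq ι] (X : ι → 𝓧) (i : ι) (v : 𝓧) :
    offDiagSum κ X - offDiagSum κ (update X i v) ≤ 2 * ((Fintype.card ι : ℝ) - 1) * K := by
  have hterm : ∀ i', ∀ j ∈ univ.erase i', κ (X i') (X j) - κ (update X i v i') (update X i v j)
      ≤ (if i' = i then (K : ℝ) else 0) + (if j = i then (K : ℝ) else 0) := by
    intro i' j hj
    have := ne_of_mem_erase hj
    by_cases h1 : i' = i <;> by_cases h2 : j = i <;> simp_all [update_of_ne]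
  calc offDiagSum κ X - offDiagSum κ (update X i v)
      ≤ ∑ i', ∑ j ∈ univ.erase i',
          ((if i' = i then (K : ℝ) else 0) + (if j = i then (K : ℝ) else 0)) := by
        simp only [offDiagSum, ← sum_sub_distrib]
        exact sum_le_sum fun i' _ ↦ sum_le_sum (hterm i')
    _ = 2 * ((Fintype.card ι : ℝ) - 1) * K := by
        have : 1 ≤ Fintype.card ι := Fintype.card_pos_iff.2 ⟨i⟩
        simp [sum_add_distrib, sum_ite, ← ne_eq, filter_ne, card_erase_of_mem, Nat.cast_sub this]
        ring

lemma mmdU_sub_mmdU_update_right_le [DecidableEq ι] [DecidableEq ι'] (h₁ : 0 < Fintype.card ι)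
    (h₂ : 2 ≤ Fintype.card ι') (X : ι → 𝓧) (Y : ι' → 𝓧) (j : ι') (v : 𝓧) :
    mmdU κ X Y - mmdU κ X (update Y j v) ≤ 4 * K / Fintype.card ι' := by
  have hn₁ : (0 : ℝ) < Fintype.card ι := by exact_mod_cast h₁
  have hn₂ : (2 : ℝ) ≤ Fintype.card ι' := by exact_mod_cast h₂
  have hoff := offDiagSum_sub_offDiagSum_update_le hK Y j v
  have hcross := sum_sub_le_card_mul hK univ X (fun _ ↦ v) X (fun _ ↦ Y j)
  rw [card_univ] at hcross
  rw [mmdU_eq, mmdU_eq, crossSum_update_right]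
  calc _ = (offDiagSum κ Y - offDiagSum κ (update Y j v))
          / (Fintype.card ι' * (Fintype.card ι' - 1))
        + 2 * (∑ i, (κ (X i) v - κ (X i) (Y j))) / (Fintype.card ι * Fintype.card ι') := by ring
    _ ≤ 2 * (Fintype.card ι' - 1) * K / (Fintype.card ι' * (Fintype.card ι' - 1))
        + 2 * (Fintype.card ι * K) / (Fintype.card ι * Fintype.card ι') := by
      gcongr
      nlinarith
    _ = 4 * K / Fintype.card ι' := by
      have : (Fintype.card ι' : ℝ) - 1 ≠ 0 := by linarith
      field_simp
      ring

lemma mmdU_sub_mmdU_sub_update_left_le [DecidableEq ι] [DecidableEq ι']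
    (h₂ : 0 < Fintype.card ι') (X : ι → 𝓧) (Y Z : ι' → 𝓧) (i : ι) (v : 𝓧) :
    (mmdU κ X Z - mmdU κ X Y) - (mmdU κ (update X i v) Z - mmdU κ (update X i v) Y)
      ≤ 4 * K / Fintype.card ι := by
  have hn₁ : (0 : ℝ) < Fintype.card ι := by exact_mod_cast Fintype.card_pos_iff.2 ⟨i⟩
  have hn₂ : (0 : ℝ) < Fintype.card ι' := by exact_mod_cast h₂
  have hZY := sum_sub_le_card_mul hK univ (fun _ ↦ v) Z (fun _ ↦ v) Y
  have hYZ := sum_sub_le_card_mul hK univ (fun _ ↦ X i) Y (fun _ ↦ X i) Z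
  rw [card_univ] at hZY hYZ
  have hrow : ∑ j, (κ v (Z j) - κ (X i) (Z j)) - ∑ j, (κ v (Y j) - κ (X i) (Y j))
      = ∑ j, (κ v (Z j) - κ v (Y j)) + ∑ j, (κ (X i) (Y j) - κ (X i) (Z j)) := by
    rw [← sum_sub_distrib, ← sum_add_distrib]
    exact sum_congr rfl fun j _ ↦ by ring
  simp only [mmdU_eq, crossSum_update_left]
  calc _ = 2 * (∑ j, (κ v (Z j) - κ v (Y j)) + ∑ j, (κ (X i) (Y j) - κ (X i) (Z j)))
        / (Fintype.card ι * Fintype.card ι') := by rw [← hrow]; ring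
    _ ≤ 2 * (Fintype.card ι' * K + Fintype.card ι' * K) / (Fintype.card ι * Fintype.card ι') := by
        gcongr
    _ = 4 * K / Fintype.card ι := by
        field_simp
        ring

lemma hasBoundedDifferences_mmdU_sub_mmdU_left [DecidableEq ι] [DecidableEq ι']
    (h₂ : 0 < Fintype.card ι') (Y Z : ι' → 𝓧) :
    HasBoundedDifferences (fun X : ι → 𝓧 ↦ mmdU κ X Z - mmdU κ X Y)
      fun _ ↦ 4 * K / Fintype.card ι := fun X i v ↦ by
  push_cast
  exact mmdU_sub_mmdU_sub_update_left_le hK h₂ X Y Z i v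

lemma hasBoundedDifferences_mmdU_sub_mmdU_mid [DecidableEq ι] [DecidableEq ι']
    (h₁ : 0 < Fintype.card ι) (h₂ : 2 ≤ Fintype.card ι') (X : ι → 𝓧) (Z : ι' → 𝓧) :
    HasBoundedDifferences (fun Y : ι' → 𝓧 ↦ mmdU κ X Z - mmdU κ X Y)
      fun _ ↦ 4 * K / Fintype.card ι' := fun Y j v ↦ by
  have := mmdU_sub_mmdU_update_right_le hK h₁ h₂ X (update Y j v) j (Y j)
  rw [update_idem, update_eq_self] at this
  push_cast
  linarith

lemma hasBoundedDifferences_mmdU_sub_mmdU_right [DecidableEq ι] [DecidableEq ι']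
    (h₁ : 0 < Fintype.card ι) (h₂ : 2 ≤ Fintype.card ι') (X : ι → 𝓧) (Y : ι' → 𝓧) :
    HasBoundedDifferences (fun Z : ι' → 𝓧 ↦ mmdU κ X Z - mmdU κ X Y)
      fun _ ↦ 4 * K / Fintype.card ι' := fun Z j v ↦ by
  push_cast
  linarith [mmdU_sub_mmdU_update_right_le hK h₁ h₂ X Z j v]

end Oscillation

end UStatistic

section Comparison

variable {𝓧 : Type*} [MeasurableSpace 𝓧] {κ : 𝓧 → 𝓧 → ℝ} {C : ℝ}
  (hκ : Measurable (uncurry κ)) (hC : ∀ a b, |κ a b| ≤ C)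
  (p q : Measure 𝓧) [IsProbabilityMeasure p] [IsProbabilityMeasure q]
include hκ hC

theorem integral_mmdU_sub_mmdU {ι ι' : Type*} [Fintype ι] [Fintype ι'] [DecidableEq ι]
    [DecidableEq ι'] (h₁ : 2 ≤ Fintype.card ι) (h₂ : 2 ≤ Fintype.card ι') :
    ∫ w, (mmdU κ w.1 w.2.2 - mmdU κ w.1 w.2.1) ∂(Measure.pi fun _ : ι ↦ p).prod
      ((Measure.pi fun _ : ι' ↦ q).prod (Measure.pi fun _ : ι' ↦ p)) = -mmdSq κ p q := by
  set Pp := Measure.pi fun _ : ι ↦ p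
  set Pq := Measure.pi fun _ : ι' ↦ q
  set Pp' := Measure.pi fun _ : ι' ↦ p
  have hm : Measurable fun z : (ι → 𝓧) × (ι' → 𝓧) ↦ mmdU κ z.1 z.2 := by unfold mmdU; fun_prop
  have hfst : (Pp.prod (Pq.prod Pp')).map (Prod.map id Prod.fst) = Pp.prod Pq := by
    rw [← Measure.map_prod_map _ _ measurable_id measurable_fst]; simp
  have hsnd : (Pp.prod (Pq.prod Pp')).map (Prod.map id Prod.snd) = Pp.prod Pp' := by
    rw [← Measure.map_prod_map _ _ measurable_id measurable_snd]; simp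
  have i₁ : Integrable (fun w : (ι → 𝓧) × (ι' → 𝓧) × (ι' → 𝓧) ↦ mmdU κ w.1 w.2.2)
      (Pp.prod (Pq.prod Pp')) :=
    .of_bound (by unfold mmdU; fun_prop) _ (ae_of_all _ fun w ↦ abs_mmdU_le hC h₁ h₂ _ _)
  have i₂ : Integrable (fun w : (ι → 𝓧) × (ι' → 𝓧) × (ι' → 𝓧) ↦ mmdU κ w.1 w.2.1)
      (Pp.prod (Pq.prod Pp')) :=
    .of_bound (by unfold mmdU; fun_prop) _ (ae_of_all _ fun w ↦ abs_mmdU_le hC h₁ h₂ _ _)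
  have e₁ : ∫ w, mmdU κ w.1 w.2.2 ∂Pp.prod (Pq.prod Pp') = mmdSq κ p p := by
    rw [← integral_mmdU hκ hC h₁ h₂, ← hsnd,
      integral_map (by fun_prop) (hsnd ▸ hm.aestronglyMeasurable)]
    rfl
  have e₂ : ∫ w, mmdU κ w.1 w.2.1 ∂Pp.prod (Pq.prod Pp') = mmdSq κ p q := by
    rw [← integral_mmdU hκ hC h₁ h₂, ← hfst,
      integral_map (by fun_prop) (hfst ▸ hm.aestronglyMeasurable)]
    rfl
  rw [integral_sub i₁ i₂, e₁, e₂, mmdSq]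
  ring

theorem hasSubgaussianMGF_mmdU_sub_mmdU {K : ℝ≥0} (hK : ∀ a b a' b', κ a b - κ a' b' ≤ K)
    {n₁ n₂ : ℕ} (h₁ : 2 ≤ n₁) (h₂ : 2 ≤ n₂) :
    HasSubgaussianMGF (fun w ↦ (mmdU κ w.1 w.2.2 - mmdU κ w.1 w.2.1)
        - ∫ w', (mmdU κ w'.1 w'.2.2 - mmdU κ w'.1 w'.2.1) ∂(Measure.pi fun _ : Fin n₁ ↦ p).prod
          ((Measure.pi fun _ : Fin n₂ ↦ q).prod (Measure.pi fun _ : Fin n₂ ↦ p)))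
      (4 * K ^ 2 / n₁ + 8 * K ^ 2 / n₂)
      ((Measure.pi fun _ : Fin n₁ ↦ p).prod
        ((Measure.pi fun _ : Fin n₂ ↦ q).prod (Measure.pi fun _ : Fin n₂ ↦ p))) := by
  have h₁' : 2 ≤ Fintype.card (Fin n₁) := by simpa using h₁
  have h₂' : 2 ≤ Fintype.card (Fin n₂) := by simpa using h₂
  have hf : Measurable fun w : (Fin n₁ → 𝓧) × (Fin n₂ → 𝓧) × (Fin n₂ → 𝓧) ↦
      mmdU κ w.1 w.2.2 - mmdU κ w.1 w.2.1 := by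
    unfold mmdU; fun_prop
  have hfC : ∀ w : (Fin n₁ → 𝓧) × (Fin n₂ → 𝓧) × (Fin n₂ → 𝓧),
      |mmdU κ w.1 w.2.2 - mmdU κ w.1 w.2.1| ≤ 8 * C := fun w ↦
    (abs_sub _ _).trans <| by
      linarith [abs_mmdU_le hC h₁' h₂' w.1 w.2.2, abs_mmdU_le hC h₁' h₂' w.1 w.2.1]
  have h₁₀ : 0 < Fintype.card (Fin n₁) := by omega
  have h₂₀ : 0 < Fintype.card (Fin n₂) := by omega
  have := hasSubgaussianMGF_prod_of_hasBoundedDifferences (fun _ ↦ p) hf hfC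
    (fun yz ↦ hasBoundedDifferences_mmdU_sub_mmdU_left hK h₂₀ yz.1 yz.2)
    fun x ↦ hasSubgaussianMGF_prod_of_hasBoundedDifferences (fun _ ↦ q)
      (hf.comp measurable_prodMk_left) (fun _ ↦ hfC _)
      (fun z ↦ hasBoundedDifferences_mmdU_sub_mmdU_mid hK h₁₀ h₂' x z)
      fun y ↦ hasSubgaussianMGF_of_hasBoundedDifferences (fun _ ↦ p)
        (hf.comp (measurable_prodMk_left.comp measurable_prodMk_left)) (fun _ ↦ hfC _)
        (hasBoundedDifferences_mmdU_sub_mmdU_right hK h₁₀ h₂' x y)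
  convert this using 1
  have : (n₁ : ℝ≥0) ≠ 0 := by positivity
  have : (n₂ : ℝ≥0) ≠ 0 := by positivity
  simp only [sum_const, card_univ, Fintype.card_fin, nsmul_eq_mul]
  field_simp
  ring

end Comparison

theorem pairwise_comparison_concentration_general
    {𝓧 : Type*} [MeasurableSpace 𝓧]
    (κ : 𝓧 → 𝓧 → ℝ) (K : ℝ)
    (hκ : Measurable (Function.uncurry κ)) (hb : ∀ x y, 0 ≤ κ x y ∧ κ x y ≤ K)
    (p q : Measure 𝓧) [IsProbabilityMeasure p] [IsProbabilityMeasure q]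
    (hpq : 0 < mmdSq κ p q)
    {m : ℕ} (hm : 2 ≤ m)
    {Ω : Type*} [MeasurableSpace Ω] (P : Measure Ω)
    (X Y₁ Yk : Ω → Fin m → 𝓧)
    (hX : Measurable X) (hY₁ : Measurable Y₁) (hYk : Measurable Yk)
    (hlaw : Measure.map (fun ω => (X ω, Y₁ ω, Yk ω)) P
      = (Measure.pi fun _ : Fin m => p).prod
          ((Measure.pi fun _ : Fin m => q).prod (Measure.pi fun _ : Fin m => p))) :
    P {ω | mmdU κ (X ω) (Yk ω) > mmdU κ (X ω) (Y₁ ω)}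
      ≤ ENNReal.ofReal (Real.exp (-(m : ℝ) * (mmdSq κ p q) ^ 2 / (24 * K ^ 2))) := by
  obtain ⟨x₀⟩ := nonempty_of_isProbabilityMeasure p
  lift K to ℝ≥0 using (hb x₀ x₀).1.trans (hb x₀ x₀).2
  have hC : ∀ a b, |κ a b| ≤ K := fun a b ↦ abs_le.2 ⟨by linarith [(hb a b).1, K.2], (hb a b).2⟩
  have hK : ∀ a b a' b', κ a b - κ a' b' ≤ K := fun a b a' b' ↦ by
    linarith [(hb a b).2, (hb a' b').1]
  have hm' : 2 ≤ Fintype.card (Fin m) := by simpa using hm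
  have hE := integral_mmdU_sub_mmdU hκ hC p q hm' hm'
  have hevent : P {ω | mmdU κ (X ω) (Yk ω) > mmdU κ (X ω) (Y₁ ω)}
      = ((Measure.pi fun _ : Fin m ↦ p).prod
          ((Measure.pi fun _ : Fin m ↦ q).prod (Measure.pi fun _ : Fin m ↦ p)))
        {w | 0 < mmdU κ w.1 w.2.2 - mmdU κ w.1 w.2.1} := by
    rw [← hlaw, Measure.map_apply (hX.prodMk (hY₁.prodMk hYk)) (measurableSet_lt
      measurable_const (by unfold mmdU; fun_prop))]
    simp only [Set.preimage_ofPred_eq, sub_pos, gt_iff_lt]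
  rw [hevent]
  refine (measure_pos_le_of_hasSubgaussianMGF (hasSubgaussianMGF_mmdU_sub_mmdU hκ hC p q hK hm hm)
    (by rw [hE]; linarith)).trans_eq ?_
  rw [hE]
  congr 2
  push_cast
  -- also valid for `K = 0`, where both exponents are `0` by the convention `x / 0 = 0`
  rw [show 2 * (4 * (K : ℝ) ^ 2 / m + 8 * K ^ 2 / m) = 24 * K ^ 2 / m by ring,
    div_div_eq_mul_div]
  ring

/-- Pairwise comparison concentration bound (with reference sequence). -/
theorem pairwise_comparison_concentration
    {𝓧 : Type*} [MeasurableSpace 𝓧]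
    (κ : 𝓧 → 𝓧 → ℝ) (K : ℝ)
    (hκ : Measurable (Function.uncurry κ)) (hb : ∀ x y, 0 ≤ κ x y ∧ κ x y ≤ K)
    (p q : Measure 𝓧) [IsProbabilityMeasure p] [IsProbabilityMeasure q]
    (hpq : 0 < mmdSq κ p q)
    {m : ℕ} (hm : 2 ≤ m)
    {Ω : Type*} [MeasurableSpace Ω] (P : Measure Ω) [IsProbabilityMeasure P]
    (X Y₁ Yk : Ω → Fin m → 𝓧)
    (hX : Measurable X) (hY₁ : Measurable Y₁) (hYk : Measurable Yk)
    (hlaw : Measure.map (fun ω => (X ω, Y₁ ω, Yk ω)) P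
      = (Measure.pi fun _ : Fin m => p).prod
          ((Measure.pi fun _ : Fin m => q).prod (Measure.pi fun _ : Fin m => p))) :
    P {ω | mmdU κ (X ω) (Yk ω) > mmdU κ (X ω) (Y₁ ω)}
      ≤ ENNReal.ofReal (Real.exp (-(m : ℝ) * (mmdSq κ p q) ^ 2 / (24 * K ^ 2))) :=
  pairwise_comparison_concentration_general κ K hκ hb p q hpq hm P X Y₁ Yk hX hY₁ hYk hlaw
end
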